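/- Any finite collection of integer sequences, each with all entries positive and bounded by d and each of length at least d², such that the total sum of all entries is even, can be partitioned into groups of one or two sequences each so that each group has even total sum; consequently each combined group (of length between d² and 3d²) is graphic. -/

import Mathlib

/-- The multiset of vertex degrees of a finite simple graph. -/
noncomputable def degreeMultiset {V : Type} [Fintype V] (G : SimpleGraph V) : Multiset ℕ :=
  Finset.univ.val.map fun v => (G.neighborSet v).ncard

/-- A multiset of natural numbers is graphic if it is the degree multiset of
some finite simple graph. -/
def IsGraphic (D : Multiset ℕ) : Prop :=
  ∃ (n : ℕ) (G : SimpleGraph (Fin n)), degreeMultiset G = D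

/-- The Rao order: some realization of `D₁` is an induced subgraph of some
realization of `D₂`. -/
def RaoLE (D₁ D₂ : Multiset ℕ) : Prop :=
  ∃ (m n : ℕ) (G : SimpleGraph (Fin m)) (H : SimpleGraph (Fin n)) (f : Fin m ↪ Fin n),
    degreeMultiset G = D₁ ∧ degreeMultiset H = D₂ ∧
    ∀ u v : Fin m, G.Adj u v ↔ H.Adj (f u) (f v)

-- Auxiliary development
open Finset


noncomputable def ndeg {V : Type} (G : SimpleGraph V) (v : V) : ℕ := (G.neighborSet v).ncard

lemma degreeMultiset_eq_ndeg {V : Type} [Fintype V] (G : SimpleGraph V) :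
    degreeMultiset G = Finset.univ.val.map (ndeg G) := rfl

def pc (D : Multiset ℕ) : ℕ := Multiset.card (D.filter (fun x => 1 ≤ x))
def qc (D : Multiset ℕ) : ℕ := Multiset.card (D.filter (fun x => 2 ≤ x))

lemma pc_cons (a : ℕ) (s : Multiset ℕ) :
    pc (a ::ₘ s) = (if 1 ≤ a then 1 else 0) + pc s := by
  unfold pc
  rw [Multiset.filter_cons, Multiset.card_add]
  split_ifs <;> simp

lemma qc_cons (a : ℕ) (s : Multiset ℕ) :
    qc (a ::ₘ s) = (if 2 ≤ a then 1 else 0) + qc s := by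
  unfold qc
  rw [Multiset.filter_cons, Multiset.card_add]
  split_ifs <;> simp

lemma pc_pos_of_mem {R : Multiset ℕ} {x : ℕ} (hx : x ∈ R) (h1 : 1 ≤ x) : 1 ≤ pc R := by
  have : x ∈ R.filter (fun x => 1 ≤ x) := Multiset.mem_filter.mpr ⟨hx, h1⟩
  exact Multiset.card_pos_iff_exists_mem.mpr ⟨x, this⟩

lemma qc_eq_zero {R : Multiset ℕ} (h : ∀ x ∈ R, x ≤ 1) : qc R = 0 := by
  unfold qc
  rw [Multiset.card_eq_zero, Multiset.filter_eq_nil]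
  intro x hx
  have := h x hx
  omega

lemma exists_max (D : Multiset ℕ) (h : D ≠ 0) : ∃ a ∈ D, ∀ x ∈ D, x ≤ a := by
  induction D using Multiset.induction with
  | empty => exact absurd rfl h
  | cons b s IH =>
    by_cases hs : s = 0
    · subst hs
      refine ⟨b, Multiset.mem_cons_self b 0, ?_⟩
      intro x hx
      rw [Multiset.mem_cons] at hx
      rcases hx with rfl | hx
      · exact le_refl x
      · exact absurd hx (by simp)
    · obtain ⟨a, haD, hamax⟩ := IH hs
      by_cases hab : b ≤ a
      · refine ⟨a, Multiset.mem_cons_of_mem haD, ?_⟩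
        intro x hx
        rw [Multiset.mem_cons] at hx
        rcases hx with rfl | hx
        · exact hab
        · exact hamax x hx
      · refine ⟨b, Multiset.mem_cons_self b s, ?_⟩
        intro x hx
        rw [Multiset.mem_cons] at hx
        rcases hx with rfl | hx
        · exact le_refl x
        · exact le_trans (hamax x hx) (le_of_not_ge hab)

lemma exists_two {n : ℕ} (f : Fin n → ℕ) (x y : ℕ) (t : Multiset ℕ)
    (h : Finset.univ.val.map f = x ::ₘ y ::ₘ t) :
    ∃ u v : Fin n, u ≠ v ∧ f u = x ∧ f v = y ∧
      ((Finset.univ.val.erase u).erase v).map f = t := by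
  have hx : x ∈ Finset.univ.val.map f := by rw [h]; exact Multiset.mem_cons_self _ _
  rw [Multiset.mem_map] at hx
  obtain ⟨u, hu, hufx⟩ := hx
  have h1 : (Finset.univ.val : Multiset (Fin n)) = u ::ₘ Finset.univ.val.erase u :=
    (Multiset.cons_erase hu).symm
  have h2 : Multiset.map f (u ::ₘ Finset.univ.val.erase u) = x ::ₘ (y ::ₘ t) := by
    rw [← h1, h]
  rw [Multiset.map_cons, hufx, Multiset.cons_inj_right] at h2
  have hy : y ∈ (Finset.univ.val.erase u).map f := by
    rw [h2]; exact Multiset.mem_cons_self _ _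
  rw [Multiset.mem_map] at hy
  obtain ⟨v, hv, hvfy⟩ := hy
  have h3 : Finset.univ.val.erase u = v ::ₘ (Finset.univ.val.erase u).erase v :=
    (Multiset.cons_erase hv).symm
  have h4 : Multiset.map f (v ::ₘ (Finset.univ.val.erase u).erase v) = y ::ₘ t := by
    rw [← h3, h2]
  rw [Multiset.map_cons, hvfy, Multiset.cons_inj_right] at h4
  have hne : u ≠ v := by
    have := (Finset.univ.nodup.mem_erase_iff.mp hv).1
    exact fun hc => this hc.symm
  exact ⟨u, v, hne, hufx, hvfy, h4⟩


section Surgery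
variable {V : Type} [Fintype V] [DecidableEq V]

/-- graph with one extra edge u-v -/
def addE (G : SimpleGraph V) (u v : V) (hne : u ≠ v) : SimpleGraph V where
  Adj a b := G.Adj a b ∨ (a = u ∧ b = v) ∨ (a = v ∧ b = u)
  symm := by
    constructor
    rintro a b (h1 | h1 | h1)
    · exact Or.inl h1.symm
    · exact Or.inr (Or.inr ⟨h1.2, h1.1⟩)
    · exact Or.inr (Or.inl ⟨h1.2, h1.1⟩)
  loopless := by
    constructor
    rintro a (h1 | h1 | h1)
    · exact G.loopless.irrefl a h1
    · exact hne (h1.1.symm.trans h1.2)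
    · exact hne (h1.2.symm.trans h1.1)

lemma addE_adj (G : SimpleGraph V) (u v : V) (hne : u ≠ v) (a b : V) :
    (addE G u v hne).Adj a b ↔ (G.Adj a b ∨ (a = u ∧ b = v) ∨ (a = v ∧ b = u)) := Iff.rfl

lemma addE_ndeg (G : SimpleGraph V) (u v : V) (hne : u ≠ v) (h : ¬ G.Adj u v) (w : V) :
    ndeg (addE G u v hne) w = ndeg G w + (if w = u ∨ w = v then 1 else 0) := by
  unfold ndeg
  by_cases hwu : w = u
  · subst hwu
    have hset : (addE G w v hne).neighborSet w = insert v (G.neighborSet w) := by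
      ext b
      simp only [SimpleGraph.mem_neighborSet, addE_adj, Set.mem_insert_iff]
      tauto
    have hv : v ∉ G.neighborSet w := h
    rw [hset, Set.ncard_insert_of_notMem hv (Set.toFinite _)]
    simp
  · by_cases hwv : w = v
    · subst hwv
      have hset : (addE G u w hne).neighborSet w = insert u (G.neighborSet w) := by
        ext b
        simp only [SimpleGraph.mem_neighborSet, addE_adj, Set.mem_insert_iff]
        tauto
      have hu : u ∉ G.neighborSet w := fun hm => h (G.adj_symm hm)
      rw [hset, Set.ncard_insert_of_notMem hu (Set.toFinite _)]
      simp [hwu]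
    · have hset : (addE G u v hne).neighborSet w = G.neighborSet w := by
        ext b
        simp only [SimpleGraph.mem_neighborSet, addE_adj]
        tauto
      rw [hset]
      simp [hwu, hwv]

/-- graph with edge x-y removed -/
def delE (G : SimpleGraph V) (x y : V) : SimpleGraph V where
  Adj a b := G.Adj a b ∧ ¬(a = x ∧ b = y) ∧ ¬(a = y ∧ b = x)
  symm := by
    constructor
    rintro a b ⟨h1, h2, h3⟩
    exact ⟨h1.symm, fun hc => h3 ⟨hc.2, hc.1⟩, fun hc => h2 ⟨hc.2, hc.1⟩⟩
  loopless := ⟨fun a h1 => G.loopless.irrefl a h1.1⟩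

lemma delE_adj (G : SimpleGraph V) (x y a b : V) :
    (delE G x y).Adj a b ↔ (G.Adj a b ∧ ¬(a = x ∧ b = y) ∧ ¬(a = y ∧ b = x)) := Iff.rfl

lemma delE_ndeg (G : SimpleGraph V) (x y : V) (h : G.Adj x y) (w : V) :
    ndeg (delE G x y) w + (if w = x ∨ w = y then 1 else 0) = ndeg G w := by
  have hxy : x ≠ y := G.ne_of_adj h
  unfold ndeg
  by_cases hwx : w = x
  · subst hwx
    have hset : G.neighborSet w = insert y ((delE G w y).neighborSet w) := by
      ext b
      simp only [SimpleGraph.mem_neighborSet, delE_adj, Set.mem_insert_iff]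
      by_cases hby : b = y
      · subst hby; tauto
      · tauto
    have hy : y ∉ (delE G w y).neighborSet w := by
      intro hm
      exact (hm.2.1) ⟨rfl, rfl⟩
    rw [hset, Set.ncard_insert_of_notMem hy (Set.toFinite _)]
    simp
  · by_cases hwy : w = y
    · subst hwy
      have hset : G.neighborSet w = insert x ((delE G x w).neighborSet w) := by
        ext b
        simp only [SimpleGraph.mem_neighborSet, delE_adj, Set.mem_insert_iff]
        by_cases hbx : b = x
        · subst hbx
          have := G.adj_symm h
          tauto
        · tauto
      have hx : x ∉ (delE G x w).neighborSet w := by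
        intro hm
        exact (hm.2.2) ⟨rfl, rfl⟩
      rw [hset, Set.ncard_insert_of_notMem hx (Set.toFinite _)]
      simp [hwx]
    · have hset : (delE G x y).neighborSet w = G.neighborSet w := by
        ext b
        simp only [SimpleGraph.mem_neighborSet, delE_adj]
        tauto
      rw [hset]
      simp [hwx, hwy]

end Surgery


section Count
variable {V : Type} [Fintype V] [DecidableEq V]

lemma ndeg_eq_card_neighborFinset (G : SimpleGraph V) [DecidableRel G.Adj] (v : V) :
    ndeg G v = (G.neighborFinset v).card := by
  rw [ndeg, SimpleGraph.neighborFinset_def, Set.ncard_eq_toFinset_card']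

lemma exists_switch (G : SimpleGraph V) (u v : V) (h : G.Adj u v) (d : ℕ)
    (hdeg : ∀ w, ndeg G w ≤ d)
    (hbig : (min (ndeg G u) (ndeg G v) - 1) * d + ndeg G u + ndeg G v
      < (Finset.univ.filter (fun w => 1 ≤ ndeg G w)).card) :
    ∃ x y, G.Adj x y ∧ x ≠ u ∧ x ≠ v ∧ y ≠ u ∧ y ≠ v ∧ ¬ G.Adj u x ∧ ¬ G.Adj v y := by
  classical
  by_contra hno
  push_neg at hno
  have key : ∀ w, ¬ G.Adj u w → ¬ G.Adj v w → ∀ t, G.Adj w t → G.Adj u t ∧ G.Adj v t := by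
    intro w hwu hwv t hwt
    have hwnu : w ≠ u := by rintro rfl; exact hwv (G.adj_symm h)
    have hwnv : w ≠ v := by rintro rfl; exact hwu h
    have htnu : t ≠ u := by rintro rfl; exact hwu (G.adj_symm hwt)
    have htnv : t ≠ v := by rintro rfl; exact hwv (G.adj_symm hwt)
    constructor
    · have h2 := hno t w (G.adj_symm hwt) htnu htnv hwnu hwnv
      by_cases hut : G.Adj u t
      · exact hut
      · exact absurd (h2 hut) hwv
    · exact hno w t hwt hwnu hwnv htnu htnv hwu
  letI : DecidableRel G.Adj := Classical.decRel _
  set Nu := G.neighborFinset u with hNu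
  set Nv := G.neighborFinset v with hNv
  set Z := Nu ∩ Nv with hZ
  have hsub : (Finset.univ.filter (fun w => 1 ≤ ndeg G w)) ⊆
      (Nu ∪ Nv) ∪ Z.biUnion (fun t => G.neighborFinset t) := by
    intro w hw
    rw [mem_filter] at hw
    by_cases hw1 : w ∈ Nu ∪ Nv
    · exact mem_union_left _ hw1
    · rw [mem_union, hNu, hNv, SimpleGraph.mem_neighborFinset, SimpleGraph.mem_neighborFinset] at hw1
      push_neg at hw1
      have hpos : 0 < (G.neighborFinset w).card := by
        rw [← ndeg_eq_card_neighborFinset]; exact hw.2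
      obtain ⟨t, ht⟩ := Finset.card_pos.mp hpos
      rw [SimpleGraph.mem_neighborFinset] at ht
      have hut := key w hw1.1 hw1.2 t ht
      refine mem_union_right _ (Finset.mem_biUnion.mpr ⟨t, ?_, ?_⟩)
      · rw [hZ, mem_inter, hNu, hNv, SimpleGraph.mem_neighborFinset, SimpleGraph.mem_neighborFinset]
        exact hut
      · rw [SimpleGraph.mem_neighborFinset]
        exact G.adj_symm ht
  have c1 := Finset.card_le_card hsub
  have c2 := Finset.card_union_le (Nu ∪ Nv) (Z.biUnion (fun t => G.neighborFinset t))
  have c3 := Finset.card_union_le Nu Nv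
  have c4 : (Z.biUnion (fun t => G.neighborFinset t)).card ≤ Z.card * d := by
    calc (Z.biUnion (fun t => G.neighborFinset t)).card
        ≤ ∑ t ∈ Z, (G.neighborFinset t).card := Finset.card_biUnion_le
      _ ≤ ∑ _t ∈ Z, d := by
          refine Finset.sum_le_sum ?_
          intro t _
          rw [← ndeg_eq_card_neighborFinset]
          exact hdeg t
      _ = Z.card * d := by rw [Finset.sum_const, smul_eq_mul]
  have hcu : Nu.card = ndeg G u := (ndeg_eq_card_neighborFinset G u).symm
  have hcv : Nv.card = ndeg G v := (ndeg_eq_card_neighborFinset G v).symm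
  have hvNu : v ∈ Nu := by rw [hNu, SimpleGraph.mem_neighborFinset]; exact h
  have huNv : u ∈ Nv := by rw [hNv, SimpleGraph.mem_neighborFinset]; exact G.adj_symm h
  have hZu : Z ⊆ Nu.erase v := by
    intro t ht
    rw [hZ, mem_inter] at ht
    rw [mem_erase]
    refine ⟨?_, ht.1⟩
    rintro rfl
    have := ht.2
    rw [hNv, SimpleGraph.mem_neighborFinset] at this
    exact G.irrefl this
  have hZv : Z ⊆ Nv.erase u := by
    intro t ht
    rw [hZ, mem_inter] at ht
    rw [mem_erase]
    refine ⟨?_, ht.2⟩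
    rintro rfl
    have := ht.1
    rw [hNu, SimpleGraph.mem_neighborFinset] at this
    exact G.irrefl this
  have h1 : Z.card ≤ Nu.card - 1 := by
    have := Finset.card_le_card hZu
    rwa [Finset.card_erase_of_mem hvNu] at this
  have h2 : Z.card ≤ Nv.card - 1 := by
    have := Finset.card_le_card hZv
    rwa [Finset.card_erase_of_mem huNv] at this
  have hZcard : Z.card ≤ min (ndeg G u) (ndeg G v) - 1 := by omega
  have h5 := Nat.mul_le_mul_right d hZcard
  omega

end Count
section AE
variable {V : Type} [Fintype V] [DecidableEq V]

lemma add_two_degrees (G : SimpleGraph V) (u v : V) (huv : u ≠ v) (d : ℕ)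
    (hdeg : ∀ w, ndeg G w ≤ d)
    (hbig : ¬ G.Adj u v ∨ (min (ndeg G u) (ndeg G v) - 1) * d + ndeg G u + ndeg G v
      < (Finset.univ.filter (fun w => 1 ≤ ndeg G w)).card) :
    ∃ G₂ : SimpleGraph V, ∀ w, ndeg G₂ w = ndeg G w + (if w = u ∨ w = v then 1 else 0) := by
  by_cases hadj : G.Adj u v
  · have hcnt := hbig.resolve_left (fun hc => hc hadj)
    obtain ⟨x, y, hxy, hxu, hxv, hyu, hyv, hux, hvy⟩ := exists_switch G u v hadj d hdeg hcnt
    -- G1 : remove x-y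
    set G1 := delE G x y with hG1
    have hd1 : ∀ w, ndeg G1 w + (if w = x ∨ w = y then 1 else 0) = ndeg G w :=
      delE_ndeg G x y hxy
    -- G2 : add u-x
    have hux1 : ¬ G1.Adj u x := by
      rw [hG1, delE_adj]; tauto
    have hunex : u ≠ x := fun hc => hxu hc.symm
    set G2 := addE G1 u x hunex with hG2
    have hd2 : ∀ w, ndeg G2 w = ndeg G1 w + (if w = u ∨ w = x then 1 else 0) :=
      addE_ndeg G1 u x hunex hux1
    -- G3 : add v-y
    have hvy2 : ¬ G2.Adj v y := by
      rw [hG2, addE_adj, hG1, delE_adj]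
      rintro (⟨h1, -, -⟩ | ⟨h1, -⟩ | ⟨h1, -⟩)
      · exact hvy h1
      · exact huv h1.symm
      · exact hxv h1.symm
    have hvney : v ≠ y := fun hc => hyv hc.symm
    refine ⟨addE G2 v y hvney, ?_⟩
    have hd3 := addE_ndeg G2 v y hvney hvy2
    intro w
    have e1 := hd1 w
    have e2 := hd2 w
    have e3 := hd3 w
    rw [e3, e2]
    have hne1 : x ≠ y := G.ne_of_adj hxy
    by_cases h1 : w = u <;> by_cases h2 : w = v <;> by_cases h3 : w = x <;> by_cases h4 : w = y <;>
      simp_all <;> omega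
  · refine ⟨addE G u v huv, ?_⟩
    exact addE_ndeg G u v huv hadj

end AE

lemma chain (d : ℕ) (hd : 1 ≤ d) :
    ∀ N D, Multiset.sum D = N → Even N → (∀ x ∈ D, x ≤ d) →
    (d^2 ≤ pc D ∨ (qc D ≤ 1 ∧ ∀ x ∈ D, x + qc D ≤ pc D)) →
    ∃ G : SimpleGraph (Fin (Multiset.card D)), degreeMultiset G = D := by
  intro N
  induction N using Nat.strong_induction_on with
  | _ N IH =>
  intro D hsum hev hle hJ
  by_cases hN : N = 0
  · -- base case : empty graph
    subst hN
    have hall : ∀ x ∈ D, x = 0 := by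
      intro x hx
      have h1 := Multiset.le_sum_of_mem hx
      omega
    refine ⟨⊥, ?_⟩
    rw [degreeMultiset_eq_ndeg]
    have hnd : ∀ v : Fin (Multiset.card D), ndeg (⊥ : SimpleGraph (Fin (Multiset.card D))) v = 0 := by
      intro v
      have hset : (⊥ : SimpleGraph (Fin (Multiset.card D))).neighborSet v = ∅ := by
        ext w
        simp
      unfold ndeg
      rw [hset, Set.ncard_empty]
    calc Finset.univ.val.map (ndeg (⊥ : SimpleGraph (Fin (Multiset.card D))))
        = Finset.univ.val.map (fun _ => 0) := Multiset.map_congr rfl (fun x _ => hnd x)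
      _ = Multiset.replicate (Multiset.card (Finset.univ.val : Multiset (Fin (Multiset.card D)))) 0 := by
          rw [Multiset.map_const']
      _ = D := by
          have hc : Multiset.card (Finset.univ.val : Multiset (Fin (Multiset.card D)))
              = Multiset.card D := by
            simp
          rw [hc]
          exact (Multiset.eq_replicate.mpr ⟨rfl, hall⟩).symm
  · -- main case
    have hD0 : D ≠ 0 := by
      intro hc
      rw [hc] at hsum
      simp at hsum
      omega
    obtain ⟨a, haD, hamax⟩ := exists_max D hD0
    set E := D.erase a with hE
    have hDa : a ::ₘ E = D := Multiset.cons_erase haD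
    have ha1 : 1 ≤ a := by
      by_contra hc
      have : ∀ x ∈ D, x = 0 := by
        intro x hx
        have := hamax x hx
        omega
      have : D.sum = 0 := Multiset.sum_eq_zero this
      omega
    have hE0 : E ≠ 0 := by
      intro hc
      rw [hc] at hDa
      -- D = {a}
      have hpcD : pc D = 1 := by
        rw [← hDa, pc_cons]
        simp [pc, ha1]
      have hqcD : qc D = if 2 ≤ a then 1 else 0 := by
        rw [← hDa, qc_cons]
        simp [qc]
      have hsumD : D.sum = a := by rw [← hDa]; simp
      have ha2 : 2 ≤ a := by
        rcases Nat.lt_or_ge a 2 with h2 | h2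
        · -- a = 1 : N = 1 odd
          exfalso
          have : N = a := by omega
          rcases hev with ⟨k, hk⟩
          omega
        · exact h2
      rcases hJ with hL | ⟨hq, hR⟩
      · have : d = 1 := by nlinarith [hpcD, hL]
        have := hle a haD
        omega
      · have := hR a haD
        rw [hqcD, hpcD] at this
        simp [ha2] at this
        omega
    obtain ⟨b, hbE, hbmax⟩ := exists_max E hE0
    have hbD : b ∈ D := Multiset.mem_of_mem_erase hbE
    have hab : b ≤ a := hamax b hbD
    set R := E.erase b with hR
    have hEb : b ::ₘ R = E := Multiset.cons_erase hbE
    have hDdec : D = a ::ₘ b ::ₘ R := by rw [hEb, hDa]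
    have hRle : ∀ x ∈ R, x ≤ b := fun x hx => hbmax x (Multiset.mem_of_mem_erase hx)
    have hRleD : ∀ x ∈ R, x ∈ D := by
      intro x hx
      rw [hDdec]
      exact Multiset.mem_cons_of_mem (Multiset.mem_cons_of_mem hx)
    have hb1 : 1 ≤ b := by
      by_contra hc
      have hb0 : b = 0 := by omega
      -- all of E is 0
      have hE00 : ∀ x ∈ E, x = 0 := by
        intro x hx
        have := hbmax x hx
        omega
      have hpcE : pc E = 0 := by
        unfold pc
        rw [Multiset.card_eq_zero, Multiset.filter_eq_nil]
        intro x hx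
        have := hE00 x hx
        omega
      have hqcE : qc E = 0 := qc_eq_zero (fun x hx => by have := hE00 x hx; omega)
      have hpcD : pc D = 1 := by rw [← hDa, pc_cons]; simp [ha1, hpcE]
      have hqcD : qc D = if 2 ≤ a then 1 else 0 := by rw [← hDa, qc_cons, hqcE]; simp
      have hsumE : E.sum = 0 := Multiset.sum_eq_zero hE00
      have hsumD : N = a := by
        rw [← hsum, ← hDa]
        simp [hsumE]
      have ha2 : 2 ≤ a := by
        rcases Nat.lt_or_ge a 2 with h2 | h2
        · exfalso
          rcases hev with ⟨k, hk⟩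
          omega
        · exact h2
      rcases hJ with hL | ⟨hq, hRR⟩
      · have : d = 1 := by nlinarith [hL]
        have := hle a haD
        omega
      · have := hRR a haD
        rw [hqcD, hpcD] at this
        simp [ha2] at this
        omega
    -- the reduced multiset
    set D' := (a-1) ::ₘ (b-1) ::ₘ R with hD'
    have hsum' : D'.sum = N - 2 := by
      have h1 : D.sum = a + (b + R.sum) := by rw [hDdec]; simp
      have h2 : D'.sum = (a-1) + ((b-1) + R.sum) := by rw [hD']; simp
      omega
    have hN2 : 2 ≤ N := by
      have h1 : D.sum = a + (b + R.sum) := by rw [hDdec]; simp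
      omega
    have hev' : Even (N - 2) := by
      rcases hev with ⟨k, hk⟩
      exact ⟨k - 1, by omega⟩
    have hle' : ∀ x ∈ D', x ≤ d := by
      intro x hx
      rw [hD', Multiset.mem_cons, Multiset.mem_cons] at hx
      rcases hx with rfl | rfl | hx
      · have := hle a haD; omega
      · have := hle b hbD; omega
      · exact hle x (hRleD x hx)
    have hcard' : Multiset.card D' = Multiset.card D := by
      rw [hD', hDdec]
      simp
    -- pc/qc computations
    have hpcD : pc D = 1 + 1 + pc R := by
      rw [hDdec, pc_cons, pc_cons]
      simp [ha1, hb1]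
      omega
    have hqcD : qc D = (if 2 ≤ a then 1 else 0) + (if 2 ≤ b then 1 else 0) + qc R := by
      rw [hDdec, qc_cons, qc_cons]
      omega
    -- invariant for D'
    have hJ' : d^2 ≤ pc D' ∨ (qc D' ≤ 1 ∧ ∀ x ∈ D', x + qc D' ≤ pc D') := by
      by_cases hb2 : 2 ≤ b
      · -- phase 1
        have ha2 : 2 ≤ a := le_trans hb2 hab
        have hL : d^2 ≤ pc D := by
          rcases hJ with hL | ⟨hq, -⟩
          · exact hL
          · exfalso
            rw [hqcD] at hq
            simp [ha2, hb2] at hq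
            omega
        have hpc' : pc D' = pc D := by
          rw [hD', pc_cons, pc_cons, hpcD]
          have h1 : 1 ≤ a - 1 := by omega
          have h2 : 1 ≤ b - 1 := by omega
          simp [h1, h2]
          omega
        left
        rw [hpc']
        exact hL
      · -- phase 2 : b = 1
        have hb1' : b = 1 := by omega
        have hRle1 : ∀ x ∈ R, x ≤ 1 := by
          intro x hx
          have := hRle x hx
          omega
        have hqcR : qc R = 0 := qc_eq_zero hRle1
        have hpcR1 : ∀ x ∈ R, 1 ≤ x → 1 ≤ pc R := fun x hx h1 => pc_pos_of_mem hx h1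
        right
        by_cases ha3 : 3 ≤ a
        · -- qc D' = 1, need a ≤ pc R + 1
          have hqc' : qc D' = 1 := by
            rw [hD', qc_cons, qc_cons, hqcR]
            have h1 : 2 ≤ a - 1 := by omega
            have h2 : ¬ (2 ≤ b - 1) := by omega
            simp [h1, h2]
          have hpc' : pc D' = 1 + pc R := by
            rw [hD', pc_cons, pc_cons]
            have h1 : 1 ≤ a - 1 := by omega
            have h2 : ¬ (1 ≤ b - 1) := by omega
            simp [h1, h2]
          have hkey : a ≤ pc R + 1 := by
            rcases hJ with hL | ⟨-, hRR⟩
            · -- pc D = 2 + pc R ≥ d²  and a ≤ d ≤ d² - 1... 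
              have had : a ≤ d := hle a haD
              have hd2 : 2 ≤ d := by omega
              nlinarith [hL, hpcD]
            · have := hRR a haD
              rw [hqcD, hpcD] at this
              have h2 : ¬ (2 ≤ b) := hb2
              have ha2' : 2 ≤ a := by omega
              simp [ha2', h2, hqcR] at this
              omega
          constructor
          · omega
          · intro x hx
            rw [hqc', hpc']
            rw [hD', Multiset.mem_cons, Multiset.mem_cons] at hx
            rcases hx with rfl | rfl | hx
            · omega
            · omega
            · have hx1 := hRle1 x hx
              rcases Nat.lt_or_ge x 1 with h1 | h1
              · omega
              · have := hpcR1 x hx h1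
                omega
        · -- a ≤ 2 : qc D' = 0
          have hqc' : qc D' = 0 := by
            rw [hD', qc_cons, qc_cons, hqcR]
            have h1 : ¬ (2 ≤ a - 1) := by omega
            have h2 : ¬ (2 ≤ b - 1) := by omega
            simp [h1, h2]
          constructor
          · omega
          · intro x hx
            rw [hqc']
            rw [hD', Multiset.mem_cons, Multiset.mem_cons] at hx
            have hpc'' : pc D' = (if 1 ≤ a - 1 then 1 else 0) + pc R := by
              rw [hD', pc_cons, pc_cons]
              have h2 : ¬ (1 ≤ b - 1) := by omega
              simp [h2]
            rcases hx with rfl | rfl | hx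
            · rw [hpc'']
              split_ifs <;> omega
            · rw [hpc'']
              split_ifs <;> omega
            · have hx1 := hRle1 x hx
              rcases Nat.lt_or_ge x 1 with h1 | h1
              · rw [hpc'']
                split_ifs <;> omega
              · have := hpcR1 x hx h1
                rw [hpc'']
                split_ifs <;> omega
    -- apply IH
    obtain ⟨G', hG'⟩ := IH (N - 2) (by omega) D' hsum' hev' hle' hJ'
    rw [← hcard']
    -- find vertices u v
    have hmapG' : Finset.univ.val.map (ndeg G') = (a-1) ::ₘ (b-1) ::ₘ R := by
      rw [← degreeMultiset_eq_ndeg, hG', hD']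
    obtain ⟨u, v, huv, hu, hv, hrest⟩ := exists_two (ndeg G') (a-1) (b-1) R hmapG'
    have hdeg' : ∀ w, ndeg G' w ≤ d := by
      intro w
      have hmem : ndeg G' w ∈ Finset.univ.val.map (ndeg G') :=
        Multiset.mem_map_of_mem _ (Finset.mem_univ_val w)
      rw [← degreeMultiset_eq_ndeg, hG'] at hmem
      exact hle' _ hmem
    have hAEhyp : ¬ G'.Adj u v ∨ (min (ndeg G' u) (ndeg G' v) - 1) * d + ndeg G' u + ndeg G' v
        < (Finset.univ.filter (fun w => 1 ≤ ndeg G' w)).card := by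
      by_cases hb2 : 2 ≤ b
      · right
        have ha2 : 2 ≤ a := le_trans hb2 hab
        have hL : d^2 ≤ pc D := by
          rcases hJ with hL | ⟨hq, -⟩
          · exact hL
          · exfalso
            rw [hqcD] at hq
            simp [ha2, hb2] at hq
            omega
        -- filter card equals pc D' = pc D
        have hfc : (Finset.univ.filter (fun w => 1 ≤ ndeg G' w)).card = pc D' := by
          have h1 : (Finset.univ.filter (fun w => 1 ≤ ndeg G' w)).card
              = Multiset.card (Finset.univ.val.filter (fun w => 1 ≤ ndeg G' w)) := rfl
          rw [h1]
          have h2 : (Finset.univ.val.filter (fun w => 1 ≤ ndeg G' w))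
              = (Finset.univ.val.filter ((fun x => 1 ≤ x) ∘ (ndeg G'))) := rfl
          rw [h2, ← Multiset.card_map (ndeg G'), ← Multiset.filter_map, hmapG', ← hD']
          rfl
        have hpc' : pc D' = pc D := by
          rw [hD', pc_cons, pc_cons, hpcD]
          have h1 : 1 ≤ a - 1 := by omega
          have h2 : 1 ≤ b - 1 := by omega
          simp [h1, h2]
          omega
        rw [hfc, hpc', hu, hv]
        have hmin : min (a-1) (b-1) = b - 1 := by omega
        rw [hmin]
        have had : a ≤ d := hle a haD
        have hbd : b ≤ d := hle b hbD
        have hd2 : 2 ≤ d := by omega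
        -- (b-2)*d + (a-1) + (b-1) < d^2 ≤ pc D
        have hm1 : (b - 1 - 1) * d ≤ (d - 2) * d := Nat.mul_le_mul_right d (by omega)
        have hm2 : (d - 2) * d + 2 * d = d * d := by
          have h3 : d - 2 + 2 = d := by omega
          calc (d - 2) * d + 2 * d = (d - 2 + 2) * d := (add_mul _ _ _).symm
            _ = d * d := by rw [h3]
        have hm3 : d ^ 2 = d * d := sq d
        obtain ⟨P, hP⟩ : ∃ P, (d - 2) * d = P := ⟨_, rfl⟩
        obtain ⟨Q, hQ⟩ : ∃ Q, d * d = Q := ⟨_, rfl⟩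
        obtain ⟨T, hT⟩ : ∃ T, (b - 1 - 1) * d = T := ⟨_, rfl⟩
        rw [hP, hQ] at hm2
        rw [hQ] at hm3
        rw [hP, hT] at hm1
        rw [hT]
        rw [hm3] at hL
        omega
      · -- b = 1 : v is isolated, no adjacency possible
        left
        intro hadj
        have : u ∈ G'.neighborSet v := hadj.symm
        have hpos : 0 < ndeg G' v := by
          unfold ndeg
          rw [Set.ncard_pos (Set.toFinite _)]
          exact ⟨u, this⟩
        rw [hv] at hpos
        omega
    obtain ⟨G₂, hG₂⟩ := add_two_degrees G' u v huv d hdeg' hAEhyp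
    refine ⟨G₂, ?_⟩
    rw [degreeMultiset_eq_ndeg]
    have hvmem : v ∈ Finset.univ.val.erase u := by
      rw [Finset.univ.nodup.mem_erase_iff]
      exact ⟨fun hc => huv hc.symm, Finset.mem_univ_val v⟩
    have hsplit : (Finset.univ.val : Multiset (Fin (Multiset.card D')))
        = u ::ₘ v ::ₘ (Finset.univ.val.erase u).erase v := by
      rw [Multiset.cons_erase hvmem, Multiset.cons_erase (Finset.mem_univ_val u)]
    rw [hsplit, Multiset.map_cons, Multiset.map_cons]
    have hG₂u : ndeg G₂ u = a := by rw [hG₂ u]; simp; omega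
    have hG₂v : ndeg G₂ v = b := by
      rw [hG₂ v]
      have : ¬ (v = u) := fun hc => huv hc.symm
      simp [this]
      omega
    have hrest2 : Multiset.map (ndeg G₂) ((Finset.univ.val.erase u).erase v)
        = Multiset.map (ndeg G') ((Finset.univ.val.erase u).erase v) := by
      refine Multiset.map_congr rfl ?_
      intro w hw
      have hw1 := (Finset.univ.nodup.erase u).mem_erase_iff.mp hw
      have hw2 := Finset.univ.nodup.mem_erase_iff.mp hw1.2
      rw [hG₂ w]
      simp [hw1.1, hw2.1]
    rw [hG₂u, hG₂v, hrest2, hrest, hDdec]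

lemma graphic_of (d : ℕ) (hd : 1 ≤ d) (D : Multiset ℕ)
    (hent : ∀ x ∈ D, 1 ≤ x ∧ x ≤ d) (hcard : d^2 ≤ Multiset.card D)
    (hev : Even D.sum) : IsGraphic D := by
  have hpc : pc D = Multiset.card D := by
    unfold pc
    rw [Multiset.filter_eq_self.mpr (fun x hx => (hent x hx).1)]
  obtain ⟨G, hG⟩ := chain d hd D.sum D rfl hev (fun x hx => (hent x hx).2)
    (Or.inl (by rw [hpc]; exact hcard))
  exact ⟨_, G, hG⟩

lemma pairing {α : Type} [DecidableEq α] (T : Finset α) (hev : Even T.card) :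
    ∃ P : Finset (Finset α), (∀ g ∈ P, g.card = 2 ∧ g ⊆ T) ∧
      ∀ i ∈ T, ∃! g, g ∈ P ∧ i ∈ g := by
  induction T using Finset.strongInduction with
  | _ T IH =>
  by_cases hT : T = ∅
  · subst hT
    exact ⟨∅, by simp, by simp⟩
  · obtain ⟨x, hx⟩ := Finset.nonempty_iff_ne_empty.mpr hT
    have hc1 : T.card ≠ 0 := by
      simp [Finset.card_eq_zero]
      exact hT
    have hc2 : 2 ≤ T.card := by
      rcases hev with ⟨k, hk⟩
      omega
    have hex : (T.erase x).Nonempty := by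
      rw [← Finset.card_pos, Finset.card_erase_of_mem hx]
      omega
    obtain ⟨y, hy⟩ := hex
    have hxy : y ≠ x := Finset.ne_of_mem_erase hy
    have hyT : y ∈ T := Finset.mem_of_mem_erase hy
    set T' := (T.erase x).erase y with hT'
    have hss : T' ⊂ T := by
      refine Finset.ssubset_iff_of_subset ?_ |>.mpr ⟨x, hx, ?_⟩
      · intro i hi
        exact Finset.mem_of_mem_erase (Finset.mem_of_mem_erase hi)
      · intro hc
        exact (Finset.ne_of_mem_erase (Finset.mem_of_mem_erase hc)) rfl
    have hcT' : Even T'.card := by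
      rw [hT', Finset.card_erase_of_mem hy, Finset.card_erase_of_mem hx]
      rcases hev with ⟨k, hk⟩
      exact ⟨k - 1, by omega⟩
    obtain ⟨P', hP1, hP2⟩ := IH T' hss hcT'
    refine ⟨insert {x, y} P', ?_, ?_⟩
    · intro g hg
      rcases Finset.mem_insert.mp hg with rfl | hg
      · constructor
        · rw [Finset.card_insert_of_notMem (by simp [hxy]; exact fun hc => (hxy hc.symm).elim), Finset.card_singleton]
        · intro i hi
          rcases Finset.mem_insert.mp hi with rfl | hi
          · exact hx
          · rw [Finset.mem_singleton] at hi
            subst hi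
            exact hyT
      · exact ⟨(hP1 g hg).1, (hP1 g hg).2.trans (le_of_lt hss)⟩
    · intro i hiT
      by_cases hix : i = x ∨ i = y
      · refine ⟨{x, y}, ⟨Finset.mem_insert_self _ _, ?_⟩, ?_⟩
        · rcases hix with rfl | rfl
          · exact Finset.mem_insert_self _ _
          · exact Finset.mem_insert_of_mem (Finset.mem_singleton_self _)
        · rintro g ⟨hgP, hig⟩
          rcases Finset.mem_insert.mp hgP with rfl | hgP'
          · rfl
          · exfalso
            have := (hP1 g hgP').2 hig
            rw [hT'] at this
            rcases hix with rfl | rfl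
            · exact Finset.ne_of_mem_erase (Finset.mem_of_mem_erase this) rfl
            · exact Finset.ne_of_mem_erase this rfl
      · push_neg at hix
        have hiT' : i ∈ T' := by
          rw [hT']
          exact Finset.mem_erase.mpr ⟨hix.2, Finset.mem_erase.mpr ⟨hix.1, hiT⟩⟩
        obtain ⟨g₀, ⟨hg₀P, hig₀⟩, hguniq⟩ := hP2 i hiT'
        refine ⟨g₀, ⟨Finset.mem_insert_of_mem hg₀P, hig₀⟩, ?_⟩
        rintro g ⟨hgP, hig⟩
        rcases Finset.mem_insert.mp hgP with rfl | hgP'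
        · exfalso
          rcases Finset.mem_insert.mp hig with rfl | hig'
          · exact hix.1 rfl
          · exact hix.2 (Finset.mem_singleton.mp hig')
        · exact hguniq g ⟨hgP', hig⟩

lemma parity_lemma {α : Type} [DecidableEq α] (f : α → ℕ) (U : Finset α) :
    (Even (∑ i ∈ U, f i) ↔ Even ((U.filter (fun i => ¬ Even (f i))).card)) := by
  classical
  induction U using Finset.induction with
  | empty => simp
  | insert a s hx IH =>
    rw [Finset.sum_insert hx, Finset.filter_insert, Nat.even_add]
    by_cases hfa : Even (f a)
    · rw [if_neg (by simp [hfa])]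
      simp only [hfa]
      tauto
    · rw [if_pos (by simp [hfa])]
      have hanot : a ∉ s.filter (fun i => ¬ Even (f i)) := fun hc => hx (Finset.mem_of_mem_filter _ hc)
      rw [Finset.card_insert_of_notMem hanot, Nat.even_add_one]
      tauto


/-- A finite collection of positive integer sequences, each with entries at most `d`
and length at least `d²`, with even total sum, can be partitioned into groups of one
or two sequences so that each group has even sum; each combined group is graphic. -/
theorem stmt11 (d : ℕ) (hd : 1 ≤ d) (m : ℕ) (S : Fin m → Multiset ℕ)
    (hentries : ∀ i, ∀ x ∈ S i, 1 ≤ x ∧ x ≤ d)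
    (hlen : ∀ i, d ^ 2 ≤ Multiset.card (S i))
    (heven : Even (∑ i : Fin m, (S i).sum)) :
    ∃ P : Finset (Finset (Fin m)),
      (∀ i : Fin m, ∃! g, g ∈ P ∧ i ∈ g) ∧
      (∀ g ∈ P, g.card = 1 ∨ g.card = 2) ∧
      (∀ g ∈ P, Even ((∑ i ∈ g, S i).sum) ∧ IsGraphic (∑ i ∈ g, S i)) := by
  classical
  set T := Finset.univ.filter (fun i => ¬ Even ((S i).sum)) with hT
  have hevT : Even T.card := (parity_lemma (fun i => (S i).sum) Finset.univ).mp heven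
  obtain ⟨P₀, hP₀1, hP₀2⟩ := pairing T hevT
  set P := P₀ ∪ (Finset.univ \ T).image (fun i => ({i} : Finset (Fin m))) with hP
  have hmemP : ∀ g, g ∈ P ↔ (g ∈ P₀ ∨ ∃ j, j ∉ T ∧ g = {j}) := by
    intro g
    rw [hP, Finset.mem_union, Finset.mem_image]
    constructor
    · rintro (h | ⟨j, hj, rfl⟩)
      · exact Or.inl h
      · exact Or.inr ⟨j, by simpa using (Finset.mem_sdiff.mp hj).2, rfl⟩
    · rintro (h | ⟨j, hj, rfl⟩)
      · exact Or.inl h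
      · exact Or.inr ⟨j, Finset.mem_sdiff.mpr ⟨Finset.mem_univ j, hj⟩, rfl⟩
  -- group sum facts
  have hgood : ∀ g ∈ P, Even ((∑ i ∈ g, S i).sum) ∧ IsGraphic (∑ i ∈ g, S i) := by
    intro g hg
    rcases (hmemP g).mp hg with hgP | ⟨j, hjT, rfl⟩
    · obtain ⟨hg2, hgT⟩ := hP₀1 g hgP
      obtain ⟨x, y, hxy, rfl⟩ := Finset.card_eq_two.mp hg2
      have hxT : x ∈ T := hgT (Finset.mem_insert_self _ _)
      have hyT : y ∈ T := hgT (Finset.mem_insert_of_mem (Finset.mem_singleton_self _))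
      rw [hT, Finset.mem_filter] at hxT hyT
      have hsum : (∑ i ∈ ({x, y} : Finset (Fin m)), S i) = S x + S y :=
        Finset.sum_pair hxy
      rw [hsum]
      have hevg : Even ((S x + S y).sum) := by
        rw [Multiset.sum_add, Nat.even_add]
        tauto
      refine ⟨hevg, graphic_of d hd _ ?_ ?_ hevg⟩
      · intro z hz
        rcases Multiset.mem_add.mp hz with hz | hz
        · exact hentries x z hz
        · exact hentries y z hz
      · rw [Multiset.card_add]
        have := hlen x
        omega
    · rw [Finset.sum_singleton]
      have hevg : Even ((S j).sum) := by
        by_contra hc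
        exact hjT (by rw [hT, Finset.mem_filter]; exact ⟨Finset.mem_univ j, hc⟩)
      exact ⟨hevg, graphic_of d hd _ (hentries j) (hlen j) hevg⟩
  refine ⟨P, ?_, ?_, hgood⟩
  · -- unique group
    intro i
    by_cases hiT : i ∈ T
    · obtain ⟨g₀, ⟨hg₀P, hig₀⟩, huniq⟩ := hP₀2 i hiT
      refine ⟨g₀, ⟨(hmemP g₀).mpr (Or.inl hg₀P), hig₀⟩, ?_⟩
      rintro g ⟨hgP, hig⟩
      rcases (hmemP g).mp hgP with hgP' | ⟨j, hjT, rfl⟩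
      · exact huniq g ⟨hgP', hig⟩
      · exfalso
        rw [Finset.mem_singleton] at hig
        subst hig
        exact hjT hiT
    · refine ⟨{i}, ⟨(hmemP {i}).mpr (Or.inr ⟨i, hiT, rfl⟩), Finset.mem_singleton_self i⟩, ?_⟩
      rintro g ⟨hgP, hig⟩
      rcases (hmemP g).mp hgP with hgP' | ⟨j, hjT, rfl⟩
      · exfalso
        exact hiT ((hP₀1 g hgP').2 hig)
      · rw [Finset.mem_singleton] at hig
        subst hig
        rfl
  · -- cards
    intro g hg
    rcases (hmemP g).mp hg with hgP | ⟨j, hjT, rfl⟩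
    · exact Or.inr (hP₀1 g hgP).1
    · exact Or.inl (Finset.card_singleton j)
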